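/- arXiv:2509.25421 — 4 statements merged into one kernel-verified Lean document; each statement's English description precedes it below -/
import Mathlib

section
/- For any n ∈ ℕ and any θ ∈ ℕ with θ ≥ 2, every bi-Lipschitz embedding of the complete graph K₄ into the tree W_{θ,n} has distortion at least 3/2. -/
open scoped symmDiff

/-- Condition for a pair `(l, r)` to encode a vertex of the subdivided tree `W_{θ,n}`:
`l` is the binary address (of length `k ≤ n`) of the nearest node at or below the vertex,
and `r` is the distance from the parent node of `l` along the subdivided edge into `l`
(`r = θ^(n-k)` is the node `l` itself); the root is `([], 0)`. -/
def WCond (θ n : ℕ) (p : List Bool × ℕ) : Prop :=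
  p.1.length ≤ n ∧ p.2 ≤ θ ^ n ∧ (p.1 = [] → p.2 = 0) ∧
    (p.1 ≠ [] → 1 ≤ p.2 ∧ p.2 ≤ θ ^ (n - p.1.length))

instance (θ n : ℕ) : DecidablePred (WCond θ n) := fun p => by unfold WCond; infer_instance

/-- Vertices of the tree `W_{θ,n}`. -/
def Wvertex (θ n : ℕ) : Type := { p : List Bool × ℕ // WCond θ n p }

instance (θ n : ℕ) : DecidableEq (Wvertex θ n) := Subtype.instDecidableEq

/-- Weighted depth of a node `l` of the binary tree `B_n` in `W_{θ,n}`: the sum of the lengths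
`θ^(n-i)` of the subdivided edges on the way from the root to `l`. -/
def wdepth (θ n : ℕ) (l : List Bool) : ℕ := ∑ i ∈ Finset.range l.length, θ ^ (n - (i + 1))

/-- Distance of a vertex of `W_{θ,n}` from the root. -/
def wheight (θ n : ℕ) (v : Wvertex θ n) : ℕ := wdepth θ n v.1.1.dropLast + v.1.2

/-- Longest common prefix of two lists. -/
def commonPrefix : List Bool → List Bool → List Bool
  | a :: as, b :: bs => if a = b then a :: commonPrefix as bs else []
  | _, _ => []

/-- The shortest path metric of the tree `W_{θ,n}`. -/
def Wdist (θ n : ℕ) (x y : Wvertex θ n) : ℕ :=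
  if x.1.1.isPrefixOf y.1.1 ∨ y.1.1.isPrefixOf x.1.1 then
    max (wheight θ n x) (wheight θ n y) - min (wheight θ n x) (wheight θ n y)
  else wheight θ n x + wheight θ n y - 2 * wdepth θ n (commonPrefix x.1.1 y.1.1)

/-- The root of `W_{θ,n}`. -/
def Wroot (θ n : ℕ) : Wvertex θ n := ⟨([], 0), by simp [WCond]⟩

/-!
Measure everything from the root by the Gromov product `(x | y)`, so that
`d(x, y) = |x| + |y| - 2 (x | y)` and `(x | z) ≥ min ((x | y), (y | z))`. Among four distinct
points let `c, d` be the pair with the largest product. If one of `c, d` is an ancestor of the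
other, or one of the other two points `a, b` sits on the last edge of the path to the branch node
of `c` and `d`, then three of the points lie on a geodesic, which costs distortion `2`.
Otherwise `a` and `b` leave that path above its last edge, of length `θ^(n-k)`; as everything
below a node of depth `k` is within `θ^(n-k) - 1` of it, this gives
`d(a, b) + 2 d(c, d) < d(a, c) + d(b, d)` for one of the two matchings, whence `3 λ ≤ 2 C λ`.
-/

namespace List

theorem IsPrefix.prefix_dropLast {α : Type*} {p l : List α} (h : p <+: l) (hne : p ≠ l) :
    p <+: l.dropLast :=
  prefix_of_prefix_length_le h (dropLast_prefix l) <| by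
    have hlt : p.length < l.length :=
      lt_of_le_of_ne h.length_le fun hl => hne (h.eq_of_length hl)
    rw [length_dropLast]
    omega

theorem IsPrefix.exists_append_singleton_prefix {α : Type*} {p l : List α} (h : p <+: l)
    (hne : p ≠ l) : ∃ a, p ++ [a] <+: l := by
  obtain ⟨t, rfl⟩ := h
  cases t with
  | nil => simp at hne
  | cons a t => exact ⟨a, t, by simp⟩

end List

theorem commonPrefix_comm : ∀ a b : List Bool, commonPrefix a b = commonPrefix b a
  | [], [] | [], _ :: _ | _ :: _, [] => rfl
  | a :: as, b :: bs => by
      by_cases h : a = b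
      · subst h; simp [commonPrefix, commonPrefix_comm as bs]
      · simp [commonPrefix, h, Ne.symm h]

theorem commonPrefix_prefix_left : ∀ a b : List Bool, commonPrefix a b <+: a
  | [], _ => List.nil_prefix
  | _ :: _, [] => List.nil_prefix
  | a :: as, b :: bs => by
      by_cases h : a = b
      · simpa [commonPrefix, h] using commonPrefix_prefix_left as bs
      · simp [commonPrefix, h]

theorem commonPrefix_prefix_right (a b : List Bool) : commonPrefix a b <+: b :=
  commonPrefix_comm a b ▸ commonPrefix_prefix_left b a

theorem prefix_commonPrefix {a b p : List Bool} (ha : p <+: a) (hb : p <+: b) :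
    p <+: commonPrefix a b := by
  induction p generalizing a b with
  | nil => exact List.nil_prefix
  | cons x p ih =>
    obtain ⟨a, rfl, hpa⟩ := List.cons_prefix_iff.mp ha
    obtain ⟨b, rfl, hpb⟩ := List.cons_prefix_iff.mp hb
    simpa [commonPrefix] using ih hpa hpb

theorem commonPrefix_prefix_or (a b c : List Bool) :
    commonPrefix a b <+: commonPrefix a c ∨ commonPrefix b c <+: commonPrefix a c :=
  (List.prefix_or_prefix_of_prefix (commonPrefix_prefix_right a b)
    (commonPrefix_prefix_left b c)).imp
    (fun h => prefix_commonPrefix (commonPrefix_prefix_left a b)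
      (h.trans (commonPrefix_prefix_right b c)))
    (fun h => prefix_commonPrefix (h.trans (commonPrefix_prefix_left a b))
      (commonPrefix_prefix_right b c))

theorem ne_of_commonPrefix_append_prefix {a b : List Bool} {x y : Bool}
    (ha : commonPrefix a b ++ [x] <+: a) (hb : commonPrefix a b ++ [y] <+: b) : x ≠ y := by
  rintro rfl
  have := (prefix_commonPrefix ha hb).length_le
  simp at this

section Depth

variable {θ n : ℕ}

theorem wdepth_mono {p l : List Bool} (h : p <+: l) : wdepth θ n p ≤ wdepth θ n l :=
  Finset.sum_le_sum_of_subset (Finset.range_subset_range.mpr h.length_le)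

theorem wdepth_dropLast_add_pow {l : List Bool} (hl : l ≠ []) :
    wdepth θ n l.dropLast + θ ^ (n - l.length) = wdepth θ n l := by
  obtain ⟨k, hk⟩ : ∃ k, l.length = k + 1 :=
    Nat.exists_eq_succ_of_ne_zero (List.length_pos_iff.mpr hl).ne'
  simp only [wdepth, List.length_dropLast, hk, Nat.add_sub_cancel, Finset.sum_range_succ]

theorem wdepth_add_pow_le {p l : List Bool} (h : p <+: l) (hne : p ≠ l) :
    wdepth θ n p + θ ^ (n - l.length) ≤ wdepth θ n l := by
  have hl : l ≠ [] := by
    rintro rfl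
    exact hne (List.prefix_nil.mp h)
  rw [← wdepth_dropLast_add_pow hl]
  exact Nat.add_le_add_right (wdepth_mono (h.prefix_dropLast hne)) _

theorem wdepth_lt_of_prefix (hθ : 0 < θ) {p l : List Bool} (h : p <+: l) (hne : p ≠ l) :
    wdepth θ n p < wdepth θ n l :=
  (Nat.lt_add_of_pos_right (pow_pos hθ _)).trans_le (wdepth_add_pow_le h hne)

theorem sum_range_pow_add_pow_le (hθ : 2 ≤ θ) {k m : ℕ} (hkm : k ≤ m) (hmn : m ≤ n) :
    ∑ i ∈ Finset.range m, θ ^ (n - (i + 1)) + θ ^ (n - m) ≤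
      ∑ i ∈ Finset.range k, θ ^ (n - (i + 1)) + θ ^ (n - k) := by
  induction m, hkm using Nat.le_induction with
  | base => exact le_rfl
  | succ m _ ih =>
    refine le_trans ?_ (ih (by omega))
    have hpow : θ ^ (n - m) = θ ^ (n - (m + 1)) * θ := by
      rw [← pow_succ]; congr 1; omega
    have := Nat.mul_le_mul_left (θ ^ (n - (m + 1))) hθ
    rw [Finset.sum_range_succ, hpow]
    omega

theorem wheight_le_wdepth (x : Wvertex θ n) : wheight θ n x ≤ wdepth θ n x.1.1 := by
  rcases eq_or_ne x.1.1 [] with hx | hx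
  · simp [wheight, hx, x.2.2.2.1 hx]
  · have := wdepth_dropLast_add_pow (θ := θ) (n := n) hx
    have := (x.2.2.2.2 hx).2
    simp only [wheight]
    omega

theorem wdepth_lt_wheight {p : List Bool} {x : Wvertex θ n} (h : p <+: x.1.1) (hne : p ≠ x.1.1) :
    wdepth θ n p < wheight θ n x := by
  have hx : x.1.1 ≠ [] := by
    intro hx
    rw [hx] at h hne
    exact hne (List.prefix_nil.mp h)
  have := (x.2.2.2.2 hx).1
  have := wdepth_mono (θ := θ) (n := n) (h.prefix_dropLast hne)
  simp only [wheight]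
  omega

theorem wdepth_lt_wheight_add_pow (hθ : 0 < θ) (x : Wvertex θ n) :
    wdepth θ n x.1.1 < wheight θ n x + θ ^ (n - x.1.1.length) := by
  rcases eq_or_ne x.1.1 [] with hx | hx
  · simp [hx, wdepth, pow_pos hθ]
  · have := (x.2.2.2.2 hx).1
    rw [← wdepth_dropLast_add_pow hx]
    simp only [wheight]
    omega

/-- This is where `θ ≥ 2` enters: the part of `W_{θ,n}` below a node of depth `k` is shorter than
the edge of length `θ^(n-k)` above that node. -/
theorem wheight_add_one_le (hθ : 2 ≤ θ) {p : List Bool} {x : Wvertex θ n} (h : p <+: x.1.1) :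
    wheight θ n x + 1 ≤ wdepth θ n p + θ ^ (n - p.length) :=
  calc wheight θ n x + 1 ≤ wdepth θ n x.1.1 + θ ^ (n - x.1.1.length) :=
        Nat.add_le_add (wheight_le_wdepth x) (Nat.one_le_pow _ _ (by omega))
    _ ≤ wdepth θ n p + θ ^ (n - p.length) := sum_range_pow_add_pow_le hθ h.length_le x.2.1

end Depth

/-- The Gromov product `(x | y)` of `x` and `y` at the root of `W_{θ,n}`, i.e. the height at which
the paths from the root to `x` and to `y` part. -/
def Wgromov (θ n : ℕ) (x y : Wvertex θ n) : ℕ :=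
  min (min (wheight θ n x) (wheight θ n y)) (wdepth θ n (commonPrefix x.1.1 y.1.1))

section Gromov

variable {θ n : ℕ}

theorem Wgromov_comm (x y : Wvertex θ n) : Wgromov θ n x y = Wgromov θ n y x := by
  simp only [Wgromov, min_comm (wheight θ n x), commonPrefix_comm x.1.1]

theorem Wgromov_le_left (x y : Wvertex θ n) : Wgromov θ n x y ≤ wheight θ n x :=
  (min_le_left _ _).trans (min_le_left _ _)

theorem Wgromov_le_right (x y : Wvertex θ n) : Wgromov θ n x y ≤ wheight θ n y :=
  (min_le_left _ _).trans (min_le_right _ _)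

theorem Wdist_add_two_mul_Wgromov (x y : Wvertex θ n) :
    Wdist θ n x y + 2 * Wgromov θ n x y = wheight θ n x + wheight θ n y := by
  unfold Wdist Wgromov
  simp only [List.isPrefixOf_iff_prefix]
  split_ifs with hcmp
  · have : min (wheight θ n x) (wheight θ n y) ≤ wdepth θ n (commonPrefix x.1.1 y.1.1) := by
      rcases hcmp with h | h
      · exact (min_le_left _ _).trans <| (wheight_le_wdepth x).trans
          (wdepth_mono (prefix_commonPrefix (List.prefix_refl _) h))
      · exact (min_le_right _ _).trans <| (wheight_le_wdepth y).trans
          (wdepth_mono (prefix_commonPrefix h (List.prefix_refl _)))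
    omega
  · rw [not_or] at hcmp
    have hx : wdepth θ n (commonPrefix x.1.1 y.1.1) < wheight θ n x :=
      wdepth_lt_wheight (commonPrefix_prefix_left _ _) fun e =>
        hcmp.1 (e ▸ commonPrefix_prefix_right _ _)
    have hy : wdepth θ n (commonPrefix x.1.1 y.1.1) < wheight θ n y :=
      wdepth_lt_wheight (commonPrefix_prefix_right _ _) fun e =>
        hcmp.2 (e ▸ commonPrefix_prefix_left _ _)
    omega

theorem min_Wgromov_le (x y z : Wvertex θ n) :
    min (Wgromov θ n x y) (Wgromov θ n y z) ≤ Wgromov θ n x z := by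
  have : min (wdepth θ n (commonPrefix x.1.1 y.1.1)) (wdepth θ n (commonPrefix y.1.1 z.1.1)) ≤
      wdepth θ n (commonPrefix x.1.1 z.1.1) := by
    rcases commonPrefix_prefix_or x.1.1 y.1.1 z.1.1 with h | h
    · exact min_le_of_left_le (wdepth_mono h)
    · exact min_le_of_right_le (wdepth_mono h)
  simp only [Wgromov]
  omega

theorem Wgromov_eq_wheight_of_prefix {x y : Wvertex θ n} (h : x.1.1 <+: y.1.1)
    (hne : x.1.1 ≠ y.1.1) : Wgromov θ n x y = wheight θ n x := by
  have := wheight_le_wdepth x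
  have := wdepth_lt_wheight h hne
  have := wdepth_mono (θ := θ) (n := n) (prefix_commonPrefix (List.prefix_refl _) h)
  simp only [Wgromov]
  omega

theorem Wdist_eq_add_of_Wgromov_eq {x y z : Wvertex θ n} (hxy : Wgromov θ n x y = wheight θ n x)
    (hzy : Wgromov θ n z y ≤ wheight θ n x) : Wdist θ n z y = Wdist θ n z x + Wdist θ n x y := by
  have hzx := min_Wgromov_le z y x
  rw [Wgromov_comm y x] at hzx
  have := min_Wgromov_le z x y
  have := Wgromov_le_right z x
  have := Wdist_add_two_mul_Wgromov z y
  have := Wdist_add_two_mul_Wgromov z x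
  have := Wdist_add_two_mul_Wgromov x y
  omega

end Gromov

section Branch

variable {θ n : ℕ}

theorem exists_branch_of_Wgromov_lt {c d : Wvertex θ n} (hc : Wgromov θ n c d < wheight θ n c)
    (hd : Wgromov θ n c d < wheight θ n d) :
    ∃ bb βc βd, βc ≠ βd ∧ bb ++ [βc] <+: c.1.1 ∧ bb ++ [βd] <+: d.1.1 ∧
      Wgromov θ n c d = wdepth θ n bb := by
  have hμ : Wgromov θ n c d = wdepth θ n (commonPrefix c.1.1 d.1.1) := by
    simp only [Wgromov] at *
    omega
  have hcne : commonPrefix c.1.1 d.1.1 ≠ c.1.1 := fun e => by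
    have := wheight_le_wdepth c
    rw [← e] at this
    omega
  have hdne : commonPrefix c.1.1 d.1.1 ≠ d.1.1 := fun e => by
    have := wheight_le_wdepth d
    rw [← e] at this
    omega
  obtain ⟨βc, hβc⟩ := (commonPrefix_prefix_left _ _).exists_append_singleton_prefix hcne
  obtain ⟨βd, hβd⟩ := (commonPrefix_prefix_right _ _).exists_append_singleton_prefix hdne
  exact ⟨_, βc, βd, ne_of_commonPrefix_append_prefix hβc hβd, hβc, hβd, hμ⟩

theorem wdepth_lt_Wgromov (hθ : 0 < θ) {bb : List Bool} {β : Bool} {q c : Wvertex θ n}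
    (hq : bb ++ [β] <+: q.1.1) (hc : bb ++ [β] <+: c.1.1) : wdepth θ n bb < Wgromov θ n q c := by
  have hne : ∀ {l}, bb ++ [β] <+: l → bb ≠ l := fun h e => by
    have := h.length_le
    simp [← e] at this
  have hqc := prefix_commonPrefix hq hc
  have := wdepth_lt_wheight ((List.prefix_append _ _).trans hq) (hne hq)
  have := wdepth_lt_wheight ((List.prefix_append _ _).trans hc) (hne hc)
  have := wdepth_lt_of_prefix (n := n) hθ ((List.prefix_append _ _).trans hqc) (hne hqc)
  simp only [Wgromov]
  omega

theorem Wgromov_add_pow_le_of_not_prefix {bb : List Bool} {q c : Wvertex θ n}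
    (hc : bb <+: c.1.1) (hq : ¬ bb <+: q.1.1) :
    Wgromov θ n q c + θ ^ (n - bb.length) ≤ wdepth θ n bb := by
  have hp : commonPrefix q.1.1 c.1.1 <+: bb :=
    (List.prefix_or_prefix_of_prefix (commonPrefix_prefix_right _ _) hc).resolve_right
      fun h => hq (h.trans (commonPrefix_prefix_left _ _))
  have hne : commonPrefix q.1.1 c.1.1 ≠ bb := fun e => hq (e ▸ commonPrefix_prefix_left _ _)
  have := wdepth_add_pow_le (θ := θ) (n := n) hp hne
  have : Wgromov θ n q c ≤ wdepth θ n (commonPrefix q.1.1 c.1.1) := min_le_right _ _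
  omega

/-- A point `q` no farther from `c` and `d` than their branch node `bb` either lies on the edge
into `bb` or leaves the path to `bb` above that edge. -/
theorem addr_eq_or_Wgromov_add_pow_le (hθ : 0 < θ) {bb : List Bool} {βc βd : Bool}
    {q c d : Wvertex θ n} (hβ : βc ≠ βd) (hc : bb ++ [βc] <+: c.1.1) (hd : bb ++ [βd] <+: d.1.1)
    (hqc : Wgromov θ n q c ≤ wdepth θ n bb) (hqd : Wgromov θ n q d ≤ wdepth θ n bb) :
    q.1.1 = bb ∨ Wgromov θ n q c + θ ^ (n - bb.length) ≤ wdepth θ n bb ∧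
      Wgromov θ n q d + θ ^ (n - bb.length) ≤ wdepth θ n bb := by
  by_cases hq : bb <+: q.1.1
  · left
    by_contra hne
    obtain ⟨β, hβq⟩ := hq.exists_append_singleton_prefix (Ne.symm hne)
    have : β = βc ∨ β = βd := by revert hβ; cases β <;> cases βc <;> cases βd <;> decide
    rcases this with rfl | rfl
    · exact (wdepth_lt_Wgromov hθ hβq hc).not_ge hqc
    · exact (wdepth_lt_Wgromov hθ hβq hd).not_ge hqd
  · exact Or.inr ⟨Wgromov_add_pow_le_of_not_prefix ((List.prefix_append _ _).trans hc) hq,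
      Wgromov_add_pow_le_of_not_prefix ((List.prefix_append _ _).trans hd) hq⟩

theorem Wdist_add_two_mul_lt (hθ : 2 ≤ θ) {bb : List Bool} {x y c d : Wvertex θ n}
    (hc : bb <+: c.1.1) (hd : bb <+: d.1.1) (hcd : Wgromov θ n c d = wdepth θ n bb)
    (hyd : Wgromov θ n y d + θ ^ (n - bb.length) ≤ wdepth θ n bb)
    (hxc : Wgromov θ n x c ≤ Wgromov θ n x y) :
    Wdist θ n x y + 2 * Wdist θ n c d < Wdist θ n x c + Wdist θ n y d := by
  have := wheight_add_one_le hθ hc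
  have := wheight_add_one_le hθ hd
  have := Wdist_add_two_mul_Wgromov x y
  have := Wdist_add_two_mul_Wgromov c d
  have := Wdist_add_two_mul_Wgromov x c
  have := Wdist_add_two_mul_Wgromov y d
  omega

end Branch

section Distortion

variable {α : Type*} {dist : α → α → ℕ} {S : Set α} {L U : ℝ}

theorem three_mul_le_two_mul_of_dist_eq_add
    (hS : S.Pairwise fun x y => (dist x y : ℝ) ∈ Set.Icc L U) {x y z : α}
    (hx : x ∈ S) (hy : y ∈ S) (hz : z ∈ S) (hxy : x ≠ y) (hyz : y ≠ z) (hxz : x ≠ z)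
    (h : dist x z = dist x y + dist y z) : 3 * L ≤ 2 * U := by
  obtain ⟨hLxy, -⟩ := hS hx hy hxy
  obtain ⟨hLyz, -⟩ := hS hy hz hyz
  obtain ⟨hLxz, hUxz⟩ := hS hx hz hxz
  have : (dist x z : ℝ) = dist x y + dist y z := by exact_mod_cast h
  linarith

theorem three_mul_le_two_mul_of_dist_add_two_mul_le
    (hS : S.Pairwise fun x y => (dist x y : ℝ) ∈ Set.Icc L U) {a b c d : α}
    (ha : a ∈ S) (hb : b ∈ S) (hc : c ∈ S) (hd : d ∈ S)
    (hab : a ≠ b) (hcd : c ≠ d) (hac : a ≠ c) (hbd : b ≠ d)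
    (h : dist a b + 2 * dist c d ≤ dist a c + dist b d) : 3 * L ≤ 2 * U := by
  obtain ⟨hLab, -⟩ := hS ha hb hab
  obtain ⟨hLcd, -⟩ := hS hc hd hcd
  obtain ⟨-, hUac⟩ := hS ha hc hac
  obtain ⟨-, hUbd⟩ := hS hb hd hbd
  have : (dist a b : ℝ) + 2 * dist c d ≤ dist a c + dist b d := by exact_mod_cast h
  linarith

end Distortion

section FourPoints

variable {θ n : ℕ} {S : Set (Wvertex θ n)} {L U : ℝ}

/-- With `a` on the edge into `bb`, one of `a`, `b` lies between the other one and `c`. -/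
theorem three_mul_le_two_mul_of_addr_eq (hθ : 0 < θ)
    (hS : S.Pairwise fun x y => (Wdist θ n x y : ℝ) ∈ Set.Icc L U) {bb : List Bool} {β : Bool}
    {a b c : Wvertex θ n} (ha : a ∈ S) (hb : b ∈ S) (hc : c ∈ S)
    (hab : a ≠ b) (hac : a ≠ c) (hbc : b ≠ c) (ha' : a.1.1 = bb) (hc' : bb ++ [β] <+: c.1.1)
    (hb' : b.1.1 = bb ∨ Wgromov θ n b c + θ ^ (n - bb.length) ≤ wdepth θ n bb) :
    3 * L ≤ 2 * U := by
  have hpre : ∀ {x : Wvertex θ n}, x.1.1 = bb → x.1.1 <+: c.1.1 := fun hx =>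
    hx ▸ (List.prefix_append _ _).trans hc'
  have hne : ∀ {x : Wvertex θ n}, x.1.1 = bb → x.1.1 ≠ c.1.1 := fun hx e => by
    have := hc'.length_le
    rw [← e, hx] at this
    simp at this
  have hμa := Wgromov_eq_wheight_of_prefix (hpre ha') (hne ha')
  by_cases hbc' : Wgromov θ n b c ≤ wheight θ n a
  · exact three_mul_le_two_mul_of_dist_eq_add hS hb ha hc (Ne.symm hab) hac hbc
      (Wdist_eq_add_of_Wgromov_eq hμa hbc')
  rcases hb' with hb' | hb'
  · have hμb := Wgromov_eq_wheight_of_prefix (hpre hb') (hne hb')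
    exact three_mul_le_two_mul_of_dist_eq_add hS ha hb hc hab hbc hac
      (Wdist_eq_add_of_Wgromov_eq hμb (by omega))
  · have := wdepth_lt_wheight_add_pow (n := n) hθ a
    rw [ha'] at this
    omega

theorem three_mul_le_two_mul_of_Wgromov_le (hθ : 2 ≤ θ)
    (hS : S.Pairwise fun x y => (Wdist θ n x y : ℝ) ∈ Set.Icc L U) {a b c d : Wvertex θ n}
    (ha : a ∈ S) (hb : b ∈ S) (hc : c ∈ S) (hd : d ∈ S)
    (hab : a ≠ b) (hac : a ≠ c) (had : a ≠ d) (hbc : b ≠ c) (hbd : b ≠ d) (hcd : c ≠ d)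
    (hμac : Wgromov θ n a c ≤ Wgromov θ n c d) (hμad : Wgromov θ n a d ≤ Wgromov θ n c d)
    (hμbc : Wgromov θ n b c ≤ Wgromov θ n c d) (hμbd : Wgromov θ n b d ≤ Wgromov θ n c d) :
    3 * L ≤ 2 * U := by
  rcases (Wgromov_le_left c d).eq_or_lt with hμc | hμc
  · exact three_mul_le_two_mul_of_dist_eq_add hS ha hc hd hac hcd had
      (Wdist_eq_add_of_Wgromov_eq hμc (hμad.trans hμc.le))
  rcases (Wgromov_le_right c d).eq_or_lt with hμd | hμd
  · exact three_mul_le_two_mul_of_dist_eq_add hS ha hd hc had hcd.symm hac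
      (Wdist_eq_add_of_Wgromov_eq ((Wgromov_comm d c).trans hμd) (hμac.trans hμd.le))
  obtain ⟨bb, βc, βd, hβ, hcbb, hdbb, hμcd⟩ := exists_branch_of_Wgromov_lt hμc hμd
  rw [hμcd] at hμac hμad hμbc hμbd
  have hθ' : 0 < θ := by omega
  have hb' := addr_eq_or_Wgromov_add_pow_le hθ' hβ hcbb hdbb hμbc hμbd
  rcases addr_eq_or_Wgromov_add_pow_le hθ' hβ hcbb hdbb hμac hμad with ha' | ⟨hac', had'⟩
  · exact three_mul_le_two_mul_of_addr_eq hθ' hS ha hb hc hab hac hbc ha' hcbb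
      (hb'.imp_right And.left)
  rcases hb' with hb' | ⟨-, hbd'⟩
  · exact three_mul_le_two_mul_of_addr_eq hθ' hS hb ha hc hab.symm hbc hac hb' hcbb (Or.inr hac')
  have hc' := (List.prefix_append _ _).trans hcbb
  have hd' := (List.prefix_append _ _).trans hdbb
  rcases le_total (Wgromov θ n a c) (Wgromov θ n b c) with h | h
  · have hμab := min_Wgromov_le a c b
    rw [Wgromov_comm c b, min_eq_left h] at hμab
    exact three_mul_le_two_mul_of_dist_add_two_mul_le hS ha hb hc hd hab hcd hac hbd
      (Wdist_add_two_mul_lt hθ hc' hd' hμcd hbd' hμab).le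
  · have hμba := min_Wgromov_le b c a
    rw [Wgromov_comm c a, min_eq_left h] at hμba
    exact three_mul_le_two_mul_of_dist_add_two_mul_le hS hb ha hc hd hab.symm hcd hbc had
      (Wdist_add_two_mul_lt hθ hc' hd' hμcd had' hμba).le

theorem three_mul_le_two_mul_of_injective (hθ : 2 ≤ θ) {f : Fin 4 → Wvertex θ n}
    (hf : Function.Injective f)
    (hS : (Set.range f).Pairwise fun x y => (Wdist θ n x y : ℝ) ∈ Set.Icc L U) :
    3 * L ≤ 2 * U := by
  obtain ⟨⟨i, j⟩, hij, hmax⟩ := Finset.univ.offDiag.exists_max_image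
    (fun p : Fin 4 × Fin 4 => Wgromov θ n (f p.1) (f p.2)) ⟨(0, 1), by decide⟩
  have hij : i ≠ j := (Finset.mem_offDiag.mp hij).2.2
  have hμ : ∀ u v, u ≠ v → Wgromov θ n (f u) (f v) ≤ Wgromov θ n (f i) (f j) := fun u v huv =>
    hmax (u, v) (Finset.mem_offDiag.mpr ⟨Finset.mem_univ _, Finset.mem_univ _, huv⟩)
  have hrest : ∀ i j : Fin 4, i ≠ j → ∃ k l, k ≠ l ∧ k ≠ i ∧ k ≠ j ∧ l ≠ i ∧ l ≠ j := by decide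
  obtain ⟨k, l, hkl, hki, hkj, hli, hlj⟩ := hrest i j hij
  exact three_mul_le_two_mul_of_Wgromov_le hθ hS (Set.mem_range_self k) (Set.mem_range_self l)
    (Set.mem_range_self i) (Set.mem_range_self j) (hf.ne hkl) (hf.ne hki) (hf.ne hkj)
    (hf.ne hli) (hf.ne hlj) (hf.ne hij) (hμ _ _ hki) (hμ _ _ hkj) (hμ _ _ hli) (hμ _ _ hlj)

end FourPoints

/-- for any `n` and `θ ≥ 2`, every bi-Lipschitz embedding of the complete graph
`K₄` (4 points at pairwise distance 1) into the tree `W_{θ,n}` has distortion at least `3/2`. -/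
theorem K4_into_W_distortion (n θ : ℕ) (hθ : 2 ≤ θ) (f : Fin 4 → Wvertex θ n)
    (hf : Function.Injective f) (C lam : ℝ) (hlam : 0 < lam)
    (h : ∀ u v : Fin 4, u ≠ v →
      lam ≤ (Wdist θ n (f u) (f v) : ℝ) ∧ (Wdist θ n (f u) (f v) : ℝ) ≤ C * lam) :
    (3 : ℝ) / 2 ≤ C := by
  have hS : (Set.range f).Pairwise fun x y => (Wdist θ n x y : ℝ) ∈ Set.Icc lam (C * lam) := by
    rintro _ ⟨u, rfl⟩ _ ⟨v, rfl⟩ huv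
    exact h u v (ne_of_apply_ne f huv)
  have := three_mul_le_two_mul_of_injective hθ hf hS
  nlinarith
end

section
/- Let (M_n) be a sequence of metric spaces such that for every n, every embedding of K₄ into M_n has distortion at least 3/2. Then the sequence of complete graphs (K_k) does not equi-bi-Lipschitzly embed into (M_n): for every C ≥ 1 there exists k such that for every n, every embedding of K_k into M_n has distortion greater than C. -/
/-!
Colour each pair of points of `K_k` by the interval `[q^j λ, q^(j+1) λ)` containing the distance
of its images, with `q = 5/4`; a distortion-`C` embedding needs only `m` colours, where
`C < q^m`. Ramsey's theorem (in Erdős–Szekeres form: grow a chain in which each point sees all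
later points in a single colour, then apply pigeonhole to those colours) yields a monochromatic
`K₄` once `k` is large, and on it the embedding has distortion at most `5/4 < 3/2`.
-/

open Finset

theorem exists_color_chain {α : Type*} {r : ℕ} (χ : α → α → Fin r) :
    ∀ (L : ℕ) (S : Finset α), (r + 1) ^ L ≤ #S →
      ∃ (x : Fin L → α) (c : Fin L → Fin r), (∀ i, x i ∈ S) ∧
        ∀ i j, i < j → x i ≠ x j ∧ χ (x i) (x j) = c i := by
  classical
  intro L
  induction L with
  | zero => exact fun _ _ => ⟨Fin.elim0, Fin.elim0, fun i => i.elim0, fun i => i.elim0⟩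
  | succ L ih =>
    intro S hS
    obtain ⟨a, ha⟩ : S.Nonempty := card_pos.1 (lt_of_lt_of_le (by positivity) hS)
    obtain ⟨c₀, -, hc₀⟩ : ∃ c₀ ∈ (univ : Finset (Fin r)),
        (r + 1) ^ L ≤ #{b ∈ S.erase a | χ a b = c₀} := by
      refine exists_le_card_fiber_of_mul_le_card_of_maps_to (fun _ _ => mem_univ _)
        ⟨χ a a, mem_univ _⟩ ?_
      rw [card_univ, Fintype.card_fin, card_erase_of_mem ha]
      have := Nat.one_le_pow L (r + 1) (by omega)
      rw [pow_succ, mul_add_one, mul_comm] at hS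
      omega
    obtain ⟨x, c, hxS, hxc⟩ := ih _ hc₀
    refine ⟨Fin.cons a x, Fin.cons c₀ c, ?_, ?_⟩
    · refine Fin.forall_fin_succ.2 ⟨ha, fun i => ?_⟩
      simpa using mem_of_mem_erase (mem_filter.1 (hxS i)).1
    · have hx : ∀ i, a ≠ x i ∧ χ a (x i) = c₀ := fun i =>
        have hi := mem_filter.1 (hxS i)
        ⟨(ne_of_mem_erase hi.1).symm, hi.2⟩
      simpa [Fin.forall_fin_succ, Fin.succ_lt_succ_iff, Fin.succ_pos] using ⟨hx, hxc⟩

theorem exists_monochromatic_of_pow_le_card {α : Type*} [Fintype α] {r : ℕ}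
    (χ : α → α → Fin r) (s : ℕ) (hα : (r + 1) ^ (r * s + 1) ≤ Fintype.card α) :
    ∃ (x : Fin (s + 1) → α) (c : Fin r),
      ∀ i j, i < j → x i ≠ x j ∧ χ (x i) (x j) = c := by
  classical
  obtain ⟨x, c, -, hxc⟩ := exists_color_chain χ (r * s + 1) univ hα
  obtain ⟨c₀, hc₀⟩ := Fintype.exists_lt_card_fiber_of_mul_lt_card c (n := s) (by simp)
  let e := ({i | c i = c₀} : Finset _).orderEmbOfCardLe hc₀
  refine ⟨x ∘ e, c₀, fun i j hij => ?_⟩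
  have hcolor : c (e i) = c₀ := (mem_filter.1 (orderEmbOfCardLe_mem _ hc₀ i)).2
  simpa [hcolor] using hxc (e i) (e j) (e.strictMono hij)

theorem exists_lt_pow_mul_near {q C lam d : ℝ} {m : ℕ} (hq : 1 < q) (hCm : C < q ^ m)
    (hlam : 0 < lam) (hlow : lam ≤ d) (hup : d ≤ C * lam) :
    ∃ j < m, q ^ j * lam ≤ d ∧ d < q ^ (j + 1) * lam := by
  obtain ⟨j, hjd, hdj⟩ := exists_nat_pow_near ((one_le_div hlam).2 hlow) hq
  have hjm : q ^ j < q ^ m :=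
    calc q ^ j ≤ d / lam := hjd
      _ ≤ C := (div_le_iff₀ hlam).2 hup
      _ < q ^ m := hCm
  exact ⟨j, (pow_lt_pow_iff_right₀ hq).1 hjm, (le_div_iff₀ hlam).1 hjd,
    (div_lt_iff₀ hlam).1 hdj⟩

def HasDistortionLE {ι X : Type*} [PseudoMetricSpace X] (f : ι → X) (C lam : ℝ) : Prop :=
  ∀ u v, u ≠ v → lam ≤ dist (f u) (f v) ∧ dist (f u) (f v) ≤ C * lam

theorem hasDistortionLE_of_lt {ι X : Type*} [LinearOrder ι] [PseudoMetricSpace X]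
    {f : ι → X} {C lam : ℝ}
    (h : ∀ u v, u < v → lam ≤ dist (f u) (f v) ∧ dist (f u) (f v) ≤ C * lam) :
    HasDistortionLE f C lam := by
  intro u v huv
  rcases huv.lt_or_gt with huv | hvu
  · exact h u v huv
  · simpa only [dist_comm] using h v u hvu

theorem HasDistortionLE.exists_restrict_fin {ι X : Type*} [Fintype ι]
    [PseudoMetricSpace X] {f : ι → X} {C lam q : ℝ} {m : ℕ} (hf : HasDistortionLE f C lam)
    (hlam : 0 < lam) (hC : 1 ≤ C) (hq : 1 < q) (hCm : C < q ^ m) (s : ℕ)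
    (hι : (m + 1) ^ (m * s + 1) ≤ Fintype.card ι) :
    ∃ (x : Fin (s + 1) → ι) (μ : ℝ), 0 < μ ∧ HasDistortionLE (f ∘ x) q μ := by
  obtain ⟨j₀, hj₀, -⟩ :=
    exists_lt_pow_mul_near hq hCm hlam le_rfl (le_mul_of_one_le_left hlam.le hC)
  have hscale : ∀ u v, ∃ j : Fin m, u ≠ v →
      q ^ (j : ℕ) * lam ≤ dist (f u) (f v) ∧
        dist (f u) (f v) < q ^ ((j : ℕ) + 1) * lam := by
    intro u v
    by_cases huv : u = v
    · exact ⟨⟨j₀, hj₀⟩, fun h => (h huv).elim⟩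
    · obtain ⟨j, hj, hjd⟩ :=
        exists_lt_pow_mul_near hq hCm hlam (hf u v huv).1 (hf u v huv).2
      exact ⟨⟨j, hj⟩, fun _ => hjd⟩
  choose χ hχ using hscale
  obtain ⟨x, c, hx⟩ := exists_monochromatic_of_pow_le_card χ s hι
  refine ⟨x, q ^ (c : ℕ) * lam, by positivity, hasDistortionLE_of_lt fun u v huv => ?_⟩
  obtain ⟨hne, hcolor⟩ := hx u v huv
  have hdist := hχ _ _ hne
  rw [hcolor, pow_succ', mul_assoc] at hdist
  exact ⟨hdist.1, hdist.2.le⟩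

/-- if every embedding of `K₄` into each `M n` has distortion at least `3/2`, then
the complete graphs `(K_k)` do not equi-bi-Lipschitzly embed into `(M_n)`: for every `C ≥ 1`
there is `k` such that for every `n`, no map `K_k → M n` satisfies
`λ ≤ d(f u, f v) ≤ C λ` on distinct points. -/
theorem no_equi_embedding_of_complete_graphs (M : ℕ → Type*) (inst : ∀ n, MetricSpace (M n))
    (h4 : ∀ n (f : Fin 4 → M n) (C lam : ℝ), 0 < lam →
      (∀ u v : Fin 4, u ≠ v →
        lam ≤ dist (f u) (f v) ∧ dist (f u) (f v) ≤ C * lam) → (3 : ℝ) / 2 ≤ C) :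
    ∀ C : ℝ, 1 ≤ C → ∃ k : ℕ, ∀ n (f : Fin k → M n) (lam : ℝ), 0 < lam →
      ¬ (∀ u v : Fin k, u ≠ v →
          lam ≤ dist (f u) (f v) ∧ dist (f u) (f v) ≤ C * lam) := by
  intro C hC
  obtain ⟨m, hm⟩ := pow_unbounded_of_one_lt C (by norm_num : (1 : ℝ) < 5 / 4)
  refine ⟨(m + 1) ^ (m * 3 + 1), fun n f lam hlam hf => ?_⟩
  obtain ⟨x, μ, hμ, hfx⟩ := HasDistortionLE.exists_restrict_fin hf hlam hC (by norm_num) hm 3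
    (by simp)
  have := h4 n (f ∘ x) (5 / 4) μ hμ hfx
  norm_num at this
end

section
/- In the lamplighter graph Lam(G) over a connected graph G, the distance between (A,x) and (B,y) equals tsp_G(x, A△B, y) + |A△B|, where tsp_G(x,S,y) is the length of the shortest walk in G starting at x, ending at y, and visiting every vertex of S, and A△B is the symmetric difference. -/
/-! A walk in `Lam G` projects to a walk of the lamplighter in `G`; each lamp of `A ∆ B` must be
toggled at least once, and only while the lamplighter stands on it, so the projection visits
`A ∆ B` and the walk spends at least `#(A ∆ B)` steps toggling. Conversely, following a walk in
`G` through `A ∆ B` and toggling each lamp of `A ∆ B` on the first visit realises this bound. -/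

open scoped symmDiff

/-- The lamplighter graph over a graph `G`: vertices are pairs (set of lamps on, position of
the lamplighter), and moves either shift the lamplighter along an edge of `G` or toggle the
lamp at the current position. -/
def Lam {V : Type*} [DecidableEq V] (G : SimpleGraph V) : SimpleGraph (Finset V × V) where
  Adj p q := (p.1 = q.1 ∧ G.Adj p.2 q.2) ∨ (p.2 = q.2 ∧ p.1 ∆ q.1 = {p.2})
  symm := by
    constructor
    rintro ⟨A, x⟩ ⟨B, y⟩ (⟨h1, h2⟩ | ⟨h1, h2⟩)
    · exact Or.inl ⟨h1.symm, h2.symm⟩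
    · exact Or.inr ⟨h1.symm, by rw [symmDiff_comm, h2, h1]⟩
  loopless := by
    constructor
    rintro ⟨A, x⟩ (⟨_, h⟩ | ⟨_, h⟩)
    · exact (G.ne_of_adj h) rfl
    · rw [symmDiff_self] at h
      exact Finset.singleton_ne_empty x h.symm

/-- The traveling salesman functional: the length of the shortest walk in `G` from `x` to `y`
visiting every vertex of `S`. -/
noncomputable def tsp {V : Type*} (G : SimpleGraph V) (x : V) (S : Finset V) (y : V) : ℕ :=
  sInf { m | ∃ w : G.Walk x y, w.length = m ∧ ∀ s ∈ S, s ∈ w.support }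

namespace SimpleGraph

variable {V : Type*} {G : SimpleGraph V}

lemma tsp_le_length {x y : V} {S : Finset V} (w : G.Walk x y)
    (hw : ∀ s ∈ S, s ∈ w.support) : tsp G x S y ≤ w.length :=
  Nat.sInf_le ⟨w, rfl, hw⟩

lemma Connected.exists_walk_forall_mem_support (hG : G.Connected) (x y : V) (S : Finset V) :
    ∃ w : G.Walk x y, ∀ s ∈ S, s ∈ w.support := by
  induction S using Finset.cons_induction with
  | empty => exact ⟨(hG x y).some, by simp⟩
  | cons a S _ ih =>
    obtain ⟨w, hw⟩ := ih
    obtain ⟨p⟩ := hG y a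
    refine ⟨w.append (p.append p.reverse), fun s hs => ?_⟩
    simp only [Walk.mem_support_append_iff]
    rcases Finset.mem_cons.mp hs with rfl | hs
    · exact Or.inr (Or.inl p.end_mem_support)
    · exact Or.inl (hw s hs)

lemma Connected.exists_walk_length_eq_tsp (hG : G.Connected) (x : V) (S : Finset V) (y : V) :
    ∃ w : G.Walk x y, w.length = tsp G x S y ∧ ∀ s ∈ S, s ∈ w.support := by
  obtain ⟨w, hw⟩ := hG.exists_walk_forall_mem_support x y S
  have hne : {m | ∃ w : G.Walk x y, w.length = m ∧ ∀ s ∈ S, s ∈ w.support}.Nonempty :=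
    ⟨w.length, w, rfl, hw⟩
  exact Nat.sInf_mem hne

end SimpleGraph

namespace Lam

open SimpleGraph

variable {V : Type*} [DecidableEq V] {G : SimpleGraph V}

lemma exists_walk_of_lam_walk {p q : Finset V × V} (W : (Lam G).Walk p q) :
    ∃ w : G.Walk p.2 q.2,
      w.length + (p.1 ∆ q.1).card ≤ W.length ∧ ∀ s ∈ p.1 ∆ q.1, s ∈ w.support := by
  induction W with
  | nil => exact ⟨.nil, by simp, by simp⟩
  | @cons p r q h W ih =>
    obtain ⟨w, hlen, hw⟩ := ih
    rw [Walk.length_cons]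
    rcases h with ⟨hA, hadj⟩ | ⟨hx, hA⟩
    · rw [hA]
      exact ⟨.cons hadj w, by rw [Walk.length_cons]; omega,
        fun s hs => List.mem_cons_of_mem _ (hw s hs)⟩
    · have hsub : p.1 ∆ q.1 ⊆ insert p.2 (r.1 ∆ q.1) := by
        simpa [hA] using symmDiff_triangle (a := p.1) (b := r.1) (c := q.1)
      have hcard := (Finset.card_le_card hsub).trans (Finset.card_insert_le _ _)
      refine ⟨w.copy hx.symm rfl, by rw [Walk.length_copy]; omega, fun s hs => ?_⟩
      rw [Walk.support_copy]
      rcases Finset.mem_insert.mp (hsub hs) with rfl | hs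
      · exact hx.symm ▸ w.start_mem_support
      · exact hw s hs

lemma exists_lam_walk_of_walk {x y : V} (w : G.Walk x y) (A B : Finset V)
    (hw : ∀ s ∈ A ∆ B, s ∈ w.support) :
    ∃ W : (Lam G).Walk (A, x) (B, y), W.length ≤ w.length + (A ∆ B).card := by
  induction w generalizing A with
  | @nil u =>
    have hsub : A ∆ B ⊆ {u} := fun s hs => by simpa using hw s hs
    rcases Finset.subset_singleton_iff.mp hsub with h | h
    · obtain rfl : A = B := Finset.symmDiff_eq_empty.mp h
      exact ⟨.nil, by simp⟩
    · have htoggle : (Lam G).Adj (A, u) (B, u) := Or.inr ⟨rfl, h⟩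
      exact ⟨.cons htoggle .nil, by simp [h]⟩
  | @cons x z y hadj w ih =>
    have hw' : ∀ s ∈ A ∆ B, s ≠ x → s ∈ w.support := fun s hs hsx =>
      (List.mem_cons.mp (hw s hs)).resolve_left hsx
    by_cases hx : x ∈ A ∆ B
    · have hA' : (A ∆ {x}) ∆ B = (A ∆ B).erase x := by
        rw [symmDiff_right_comm, symmDiff_of_ge (Finset.singleton_subset_iff.mpr hx),
          Finset.sdiff_singleton_eq_erase]
      obtain ⟨W, hW⟩ := ih (A ∆ {x}) fun s hs => by
        rw [hA', Finset.mem_erase] at hs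
        exact hw' s hs.2 hs.1
      have htoggle : (Lam G).Adj (A, x) (A ∆ {x}, x) :=
        Or.inr ⟨rfl, symmDiff_symmDiff_cancel_left A {x}⟩
      have hmove : (Lam G).Adj (A ∆ {x}, x) (A ∆ {x}, z) := Or.inl ⟨rfl, hadj⟩
      refine ⟨.cons htoggle (.cons hmove W), ?_⟩
      have hcard := Finset.card_erase_add_one hx
      rw [hA'] at hW
      simp only [Walk.length_cons] at hW ⊢
      omega
    · obtain ⟨W, hW⟩ := ih A fun s hs => hw' s hs (ne_of_mem_of_not_mem hs hx)
      have hmove : (Lam G).Adj (A, x) (A, z) := Or.inl ⟨rfl, hadj⟩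
      exact ⟨.cons hmove W, by simp only [Walk.length_cons]; omega⟩

end Lam

/-- in the lamplighter graph over a connected graph `G`, the distance between
`(A, x)` and `(B, y)` equals `tsp_G(x, A ∆ B, y) + |A ∆ B|`. -/
theorem lamplighter_dist_eq {V : Type*} [DecidableEq V] (G : SimpleGraph V)
    (hG : G.Connected) (A B : Finset V) (x y : V) :
    (Lam G).dist (A, x) (B, y) = tsp G x (A ∆ B) y + (A ∆ B).card := by
  obtain ⟨w, hw, hwS⟩ := hG.exists_walk_length_eq_tsp x (A ∆ B) y
  obtain ⟨W, hW⟩ := Lam.exists_lam_walk_of_walk w A B hwS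
  obtain ⟨W', hW'⟩ := SimpleGraph.Reachable.exists_walk_length_eq_dist ⟨W⟩
  obtain ⟨w', hw', hw'S⟩ := Lam.exists_walk_of_lam_walk W'
  apply le_antisymm
  · calc (Lam G).dist (A, x) (B, y) ≤ W.length := SimpleGraph.dist_le W
      _ ≤ w.length + (A ∆ B).card := hW
      _ = tsp G x (A ∆ B) y + (A ∆ B).card := by rw [hw]
  · calc tsp G x (A ∆ B) y + (A ∆ B).card ≤ w'.length + (A ∆ B).card :=
          Nat.add_le_add_right (SimpleGraph.tsp_le_length w' hw'S) _
      _ ≤ W'.length := hw'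
      _ = (Lam G).dist (A, x) (B, y) := hW'
end

section
/- Let k, j ∈ ℕ with k > j + 3, and let u, v be vertices of the diamond graph D_k with d(u,v) ≥ 2^{k−j}. Then there exists a subdiamond D̄ isometric to D_{k−j−3} inside D_k lying between u and v, i.e., for every w ∈ D̄, d(u,w) + d(w,v) = d(u,v). -/
/-- Replace every edge `(u,v)` of `G` by a quadrilateral `u, a, v, b`: the new vertices are
pairs (edge of `G`, boolean), each adjacent exactly to the two endpoints of its edge; the
original edges are removed. -/
def subdivideDiamond {V : Type} (G : SimpleGraph V) :
    SimpleGraph (V ⊕ (G.edgeSet × Bool)) where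
  Adj x y :=
    match x, y with
    | Sum.inl u, Sum.inr e => u ∈ (e.1 : Sym2 V)
    | Sum.inr e, Sum.inl u => u ∈ (e.1 : Sym2 V)
    | _, _ => False
  symm := ⟨by rintro (u | e) (w | f) h <;> exact h⟩
  loopless := ⟨by rintro (u | e) h <;> exact h⟩

/-- The diamond graphs: `D₀` is a single edge (the complete graph on two vertices), and
`D_{k+1}` is obtained from `D_k` by replacing each edge by a quadrilateral. -/
def DSig : ℕ → Σ V : Type, SimpleGraph V
  | 0 => ⟨Bool, ⊤⟩
  | k + 1 => ⟨_, subdivideDiamond (DSig k).2⟩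

/-- The vertex set of the diamond graph `D_k`. -/
def DV (k : ℕ) : Type := (DSig k).1

/-- The diamond graph `D_k`. -/
def DG (k : ℕ) : SimpleGraph (DV k) := (DSig k).2

/-!
In the subdivision of a connected graph `G` distances are explicit: old vertices are twice as far
apart as in `G`, and a new vertex over the edge `e` lies at distance `2 d(x, e) + 1` from an old
vertex `x`. Hence subdividing preserves isometric embeddings, so the copy of `D_n` over an edge
`s t` of `D_m` sits isometrically in `D_{m+n}`, its poles (the vertices of `D_0`) going to `s`
and `t`; and every vertex of `D_n` lies on a geodesic between the poles.

A geodesic from `u` to `v` in `D_{m+n+1}` passes through old vertices `x`, `y` at most one step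
from its ends, so `2 d(x, y) ≥ d(u, v) - 2`. By induction on `n`, once `d(u, v) ≥ 3 · 2^n - 2`
some geodesic from `u` to `v` runs through both poles of the copy of `D_n` over an edge of `D_m`,
and then the whole copy lies between `u` and `v`. For `n = k - j - 3` the bound `2^(k-j)` is
enough.
-/

namespace Sym2

variable {α β : Type*} [LinearOrder β]

theorem inf_map_le {f : α → β} {e : Sym2 α} {a : α} (ha : a ∈ e) :
    (e.map f).inf ≤ f a := by
  induction e using Sym2.ind with
  | _ p q => rcases Sym2.mem_iff.mp ha with rfl | rfl <;> simp

theorem exists_mem_inf_map_eq (f : α → β) (e : Sym2 α) : ∃ a ∈ e, (e.map f).inf = f a := by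
  induction e using Sym2.ind with
  | _ p q =>
    rcases le_total (f p) (f q) with h | h
    · exact ⟨p, mem_mk_left p q, by simp [h]⟩
    · exact ⟨q, mem_mk_right p q, by simp [h]⟩

end Sym2

namespace SimpleGraph

open Sum

variable {V W : Type} {G : SimpleGraph V} {H : SimpleGraph W}

variable (G) in
noncomputable def infDist (x : V) (e : Sym2 V) : ℕ := (e.map (G.dist x)).inf

variable (G) in
noncomputable def infDistSym2 (e f : Sym2 V) : ℕ := (e.map (G.infDist · f)).inf

theorem infDist_mk (x p q : V) : G.infDist x s(p, q) = min (G.dist x p) (G.dist x q) :=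
  rfl

theorem infDist_le_dist {x y : V} {e : Sym2 V} (hy : y ∈ e) : G.infDist x e ≤ G.dist x y :=
  Sym2.inf_map_le hy

theorem exists_mem_infDist_eq (x : V) (e : Sym2 V) : ∃ p ∈ e, G.infDist x e = G.dist x p :=
  Sym2.exists_mem_inf_map_eq _ e

theorem infDist_eq_zero_of_mem {x : V} {e : Sym2 V} (hx : x ∈ e) : G.infDist x e = 0 :=
  Nat.eq_zero_of_le_zero ((infDist_le_dist hx).trans_eq dist_self)

theorem infDistSym2_le_infDist {x : V} {e f : Sym2 V} (hx : x ∈ e) :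
    G.infDistSym2 e f ≤ G.infDist x f :=
  Sym2.inf_map_le hx

theorem exists_mem_infDistSym2_eq (e f : Sym2 V) :
    ∃ p ∈ e, G.infDistSym2 e f = G.infDist p f :=
  Sym2.exists_mem_inf_map_eq _ e

theorem Connected.infDist_le_dist_add_infDist (hG : G.Connected) (x y : V) (f : Sym2 V) :
    G.infDist x f ≤ G.dist x y + G.infDist y f := by
  obtain ⟨p, hp, hyp⟩ := exists_mem_infDist_eq (G := G) y f
  rw [hyp]
  exact (infDist_le_dist hp).trans hG.dist_triangle

theorem infDist_map {φ : V → W} (hφ : ∀ a b, H.dist (φ a) (φ b) = G.dist a b) (x : V)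
    (e : Sym2 V) : H.infDist (φ x) (e.map φ) = G.infDist x e := by
  induction e using Sym2.ind with
  | _ p q => simp [infDist, hφ]

theorem infDistSym2_map {φ : V → W} (hφ : ∀ a b, H.dist (φ a) (φ b) = G.dist a b)
    (e f : Sym2 V) : H.infDistSym2 (e.map φ) (f.map φ) = G.infDistSym2 e f := by
  induction e using Sym2.ind with
  | _ p q => simp [infDistSym2, infDist_map hφ]

theorem dist_le_one_of_mem_edgeSet {e : Sym2 V} (he : e ∈ G.edgeSet) {x y : V} (hx : x ∈ e)
    (hy : y ∈ e) : G.dist x y ≤ 1 := by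
  induction e using Sym2.ind with
  | _ p q =>
    rw [mem_edgeSet] at he
    rcases Sym2.mem_iff.mp hx with rfl | rfl <;> rcases Sym2.mem_iff.mp hy with rfl | rfl <;>
      simp [dist_self, dist_eq_one_iff_adj.mpr he, dist_eq_one_iff_adj.mpr he.symm]

theorem Connected.exists_adj_one_add_dist_eq (hG : G.Connected) {u v : V} (huv : u ≠ v) :
    ∃ w, G.Adj u w ∧ 1 + G.dist w v = G.dist u v := by
  obtain ⟨p, hp⟩ := hG.exists_walk_length_eq_dist u v
  cases p with
  | nil => exact (huv rfl).elim
  | @cons _ w _ hadj p =>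
    refine ⟨w, hadj, le_antisymm ?_ ?_⟩
    · have := dist_le p
      rw [Walk.length_cons] at hp
      omega
    · exact hG.dist_triangle.trans_eq (by rw [dist_eq_one_iff_adj.mpr hadj])

open Classical in
variable (G) in
noncomputable def subdivisionDist : V ⊕ (G.edgeSet × Bool) → V ⊕ (G.edgeSet × Bool) → ℕ
  | inl x, inl y => 2 * G.dist x y
  | inl x, inr f => 2 * G.infDist x f.1 + 1
  | inr e, inl y => 2 * G.infDist y e.1 + 1
  | inr e, inr f => if e = f then 0 else 2 * G.infDistSym2 e.1 f.1 + 2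

theorem subdivisionDist_self (A : V ⊕ (G.edgeSet × Bool)) : G.subdivisionDist A A = 0 := by
  rcases A with x | e <;> simp [subdivisionDist, dist_self]

theorem Connected.subdivisionDist_inl_le (hG : G.Connected) {x : V} {e : G.edgeSet × Bool}
    (hx : x ∈ (e.1 : Sym2 V)) (B : V ⊕ (G.edgeSet × Bool)) :
    G.subdivisionDist (inl x) B ≤ G.subdivisionDist (inr e) B + 1 := by
  rcases B with y | f
  · obtain ⟨p, hp, hyp⟩ := exists_mem_infDist_eq (G := G) y e.1
    have hxp := dist_le_one_of_mem_edgeSet e.1.2 hx hp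
    have hxy : G.dist x y ≤ G.dist x p + G.dist p y := hG.dist_triangle
    simp only [subdivisionDist, hyp, dist_comm (u := y)]
    omega
  · by_cases hef : e = f
    · subst hef
      simp [subdivisionDist, infDist_eq_zero_of_mem hx]
    · obtain ⟨p, hp, hfp⟩ := exists_mem_infDistSym2_eq (G := G) e.1 f.1
      have hxp := dist_le_one_of_mem_edgeSet e.1.2 hx hp
      have := hG.infDist_le_dist_add_infDist x p f.1
      simp only [subdivisionDist, if_neg hef, hfp]
      omega

theorem subdivisionDist_inr_le {x : V} {e : G.edgeSet × Bool} (hx : x ∈ (e.1 : Sym2 V))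
    (B : V ⊕ (G.edgeSet × Bool)) :
    G.subdivisionDist (inr e) B ≤ G.subdivisionDist (inl x) B + 1 := by
  rcases B with y | f
  · have := infDist_le_dist (G := G) (x := y) hx
    simp only [subdivisionDist, dist_comm (u := x)]
    omega
  · by_cases hef : e = f
    · simp [subdivisionDist, hef]
    · have := infDistSym2_le_infDist (G := G) (f := f.1) hx
      simp only [subdivisionDist, if_neg hef]
      omega

theorem Connected.subdivisionDist_le_of_adj (hG : G.Connected) {A C : V ⊕ (G.edgeSet × Bool)}
    (h : (subdivideDiamond G).Adj A C) (B : V ⊕ (G.edgeSet × Bool)) :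
    G.subdivisionDist A B ≤ G.subdivisionDist C B + 1 := by
  rcases A with x | e <;> rcases C with y | f
  · exact h.elim
  · exact hG.subdivisionDist_inl_le h B
  · exact subdivisionDist_inr_le h B
  · exact h.elim

theorem Connected.subdivisionDist_le_length (hG : G.Connected) {A B : V ⊕ (G.edgeSet × Bool)}
    (w : (subdivideDiamond G).Walk A B) : G.subdivisionDist A B ≤ w.length := by
  induction w with
  | nil => simp [subdivisionDist_self]
  | cons h _ ih =>
    rw [Walk.length_cons]
    exact (hG.subdivisionDist_le_of_adj h _).trans (by omega)

def Walk.toSubdivideDiamond :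
    ∀ {x y : V}, G.Walk x y → (subdivideDiamond G).Walk (inl x) (inl y)
  | _, _, .nil => .nil
  | x, _, .cons (v := z) h w =>
    .cons (show (subdivideDiamond G).Adj (inl x) (inr (⟨s(x, z), h⟩, true)) from
        Sym2.mem_mk_left x z)
      (.cons (show (subdivideDiamond G).Adj (inr (⟨s(x, z), h⟩, true)) (inl z) from
        Sym2.mem_mk_right x z) w.toSubdivideDiamond)

@[simp]
theorem Walk.length_toSubdivideDiamond {x y : V} (w : G.Walk x y) :
    w.toSubdivideDiamond.length = 2 * w.length := by
  induction w with
  | nil => rfl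
  | cons _ w ih =>
    simp only [Walk.toSubdivideDiamond, Walk.length_cons, ih]
    ring

theorem Connected.exists_walk_subdivideDiamond (hG : G.Connected) (x y : V) :
    ∃ w : (subdivideDiamond G).Walk (inl x) (inl y), w.length = 2 * G.dist x y := by
  obtain ⟨w, hw⟩ := hG.exists_walk_length_eq_dist x y
  exact ⟨w.toSubdivideDiamond, by simp [hw]⟩

theorem Connected.dist_le_subdivisionDist (hG : G.Connected) (A B : V ⊕ (G.edgeSet × Bool)) :
    (subdivideDiamond G).dist A B ≤ G.subdivisionDist A B := by
  rcases A with x | e <;> rcases B with y | f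
  · obtain ⟨w, hw⟩ := hG.exists_walk_subdivideDiamond x y
    exact (dist_le w).trans_eq hw
  · obtain ⟨p, hp, hxp⟩ := exists_mem_infDist_eq (G := G) x f.1
    obtain ⟨w, hw⟩ := hG.exists_walk_subdivideDiamond x p
    have := dist_le (w.concat (show (subdivideDiamond G).Adj (inl p) (inr f) from hp))
    simpa [subdivisionDist, hxp, hw] using this
  · obtain ⟨p, hp, hyp⟩ := exists_mem_infDist_eq (G := G) y e.1
    obtain ⟨w, hw⟩ := hG.exists_walk_subdivideDiamond p y
    have := dist_le (w.cons (show (subdivideDiamond G).Adj (inr e) (inl p) from hp))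
    simpa [subdivisionDist, hyp, hw, dist_comm (u := y)] using this
  · by_cases hef : e = f
    · simp [hef, subdivisionDist_self, dist_self]
    · obtain ⟨p, hp, hep⟩ := exists_mem_infDistSym2_eq (G := G) e.1 f.1
      obtain ⟨q, hq, hpq⟩ := exists_mem_infDist_eq (G := G) p f.1
      obtain ⟨w, hw⟩ := hG.exists_walk_subdivideDiamond p q
      have := dist_le ((w.cons (show (subdivideDiamond G).Adj (inr e) (inl p) from hp)).concat
        (show (subdivideDiamond G).Adj (inl q) (inr f) from hq))
      simp only [Walk.length_concat, Walk.length_cons, hw] at this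
      simp only [subdivisionDist, if_neg hef, hep, hpq]
      omega

theorem subdivideDiamond_connected (hG : G.Connected) : (subdivideDiamond G).Connected := by
  obtain ⟨x₀⟩ := hG.nonempty
  have reach : ∀ A, (subdivideDiamond G).Reachable A (inl x₀) := by
    rintro (x | e)
    · exact (hG.exists_walk_subdivideDiamond x x₀).elim fun w _ => ⟨w⟩
    · obtain ⟨p, hp, -⟩ := exists_mem_infDist_eq (G := G) x₀ e.1
      obtain ⟨w, -⟩ := hG.exists_walk_subdivideDiamond p x₀
      exact ⟨w.cons (show (subdivideDiamond G).Adj (inr e) (inl p) from hp)⟩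
  exact (connected_iff _).mpr ⟨fun A B => (reach A).trans (reach B).symm, ⟨inl x₀⟩⟩

theorem Connected.dist_subdivideDiamond (hG : G.Connected) (A B : V ⊕ (G.edgeSet × Bool)) :
    (subdivideDiamond G).dist A B = G.subdivisionDist A B := by
  refine le_antisymm (hG.dist_le_subdivisionDist A B) ?_
  obtain ⟨w, hw⟩ := (subdivideDiamond_connected hG).exists_walk_length_eq_dist A B
  exact hw ▸ hG.subdivisionDist_le_length w

theorem Connected.exists_inl_dist_le_one_and_dist_add_dist_eq (hG : G.Connected)
    {A B : V ⊕ (G.edgeSet × Bool)} (hAB : A ≠ B) :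
    ∃ x : V, (subdivideDiamond G).dist A (inl x) ≤ 1 ∧
      (subdivideDiamond G).dist A (inl x) + (subdivideDiamond G).dist (inl x) B =
        (subdivideDiamond G).dist A B := by
  simp only [hG.dist_subdivideDiamond]
  rcases A with x | e
  · exact ⟨x, by simp [subdivisionDist_self]⟩
  rcases B with y | f
  · obtain ⟨p, hp, hyp⟩ := exists_mem_infDist_eq (G := G) y e.1
    refine ⟨p, ?_, ?_⟩ <;>
      simp [subdivisionDist, infDist_eq_zero_of_mem hp, hyp, dist_comm (u := y)]
    omega
  · have hef : e ≠ f := fun h => hAB (congrArg inr h)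
    obtain ⟨p, hp, hep⟩ := exists_mem_infDistSym2_eq (G := G) e.1 f.1
    refine ⟨p, ?_, ?_⟩ <;> simp [subdivisionDist, infDist_eq_zero_of_mem hp, hef, hep]
    omega

theorem Connected.exists_inl_inl_dist_add_dist_add_dist_eq (hG : G.Connected)
    {A B : V ⊕ (G.edgeSet × Bool)} (hAB : 2 ≤ (subdivideDiamond G).dist A B) :
    ∃ x y : V, (subdivideDiamond G).dist A (inl x) ≤ 1 ∧
      (subdivideDiamond G).dist (inl y) B ≤ 1 ∧
      (subdivideDiamond G).dist A (inl x) + 2 * G.dist x y + (subdivideDiamond G).dist (inl y) B =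
        (subdivideDiamond G).dist A B := by
  have hne {C D} (h : 1 ≤ (subdivideDiamond G).dist C D) : C ≠ D := by
    rintro rfl
    simp [dist_self] at h
  obtain ⟨x, hAx, hx⟩ :=
    hG.exists_inl_dist_le_one_and_dist_add_dist_eq (hne (one_le_two.trans hAB))
  have hxB : 1 ≤ (subdivideDiamond G).dist B (inl x) := by rw [dist_comm]; omega
  obtain ⟨y, hBy, hy⟩ := hG.exists_inl_dist_le_one_and_dist_add_dist_eq (hne hxB)
  refine ⟨x, y, hAx, dist_comm (G := subdivideDiamond G) ▸ hBy, ?_⟩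
  have hyx : (subdivideDiamond G).dist (inl y) (inl x) = 2 * G.dist x y := by
    rw [hG.dist_subdivideDiamond, subdivisionDist, dist_comm]
  rw [dist_comm (u := inl x), ← hy, hyx] at hx
  rw [dist_comm (u := inl y)]
  omega

theorem Connected.subdivideDiamond_dist_add_dist_add_dist_eq (hG : G.Connected)
    {A B : V ⊕ (G.edgeSet × Bool)} {x y s t : V}
    (hxy : (subdivideDiamond G).dist A (inl x) + 2 * G.dist x y +
      (subdivideDiamond G).dist (inl y) B = (subdivideDiamond G).dist A B)
    (hst : G.dist x s + G.dist s t + G.dist t y = G.dist x y) :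
    (subdivideDiamond G).dist A (inl s) + 2 * G.dist s t + (subdivideDiamond G).dist (inl t) B =
      (subdivideDiamond G).dist A B := by
  have hS := subdivideDiamond_connected hG
  have h2 (a b : V) : (subdivideDiamond G).dist (inl a) (inl b) = 2 * G.dist a b :=
    hG.dist_subdivideDiamond (inl a) (inl b)
  have hAs := hS.dist_triangle (u := A) (v := inl x) (w := inl s)
  have htB := hS.dist_triangle (u := inl t) (v := inl y) (w := B)
  have hAB := hS.dist_triangle (u := A) (v := inl s) (w := B)
  have hsB := hS.dist_triangle (u := inl s) (v := inl t) (w := B)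
  rw [h2] at hAs htB hsB
  omega

def Hom.mapSubdivideDiamond (f : G →g H) : subdivideDiamond G →g subdivideDiamond H where
  toFun := Sum.map f (Prod.map f.mapEdgeSet id)
  map_rel' := by
    rintro (x | e) (y | e') h
    · exact h.elim
    · exact Sym2.mem_map.mpr ⟨x, h, rfl⟩
    · exact Sym2.mem_map.mpr ⟨y, h, rfl⟩
    · exact h.elim

@[simp]
theorem Hom.mapSubdivideDiamond_inl (f : G →g H) (x : V) :
    f.mapSubdivideDiamond (inl x) = inl (f x) :=
  rfl

@[simp]
theorem Hom.mapSubdivideDiamond_inr (f : G →g H) (e : G.edgeSet × Bool) :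
    f.mapSubdivideDiamond (inr e) = inr (f.mapEdgeSet e.1, e.2) :=
  rfl

theorem Hom.dist_mapSubdivideDiamond (hG : G.Connected) (hH : H.Connected) {f : G →g H}
    (hf : ∀ a b, H.dist (f a) (f b) = G.dist a b) (A B : V ⊕ (G.edgeSet × Bool)) :
    (subdivideDiamond H).dist (f.mapSubdivideDiamond A) (f.mapSubdivideDiamond B) =
      (subdivideDiamond G).dist A B := by
  have hinj : Function.Injective f := fun a b hab =>
    hG.dist_eq_zero_iff.mp (by rw [← hf, hab, dist_self])
  rw [hG.dist_subdivideDiamond, hH.dist_subdivideDiamond]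
  have hmap : Function.Injective (Prod.map f.mapEdgeSet (id : Bool → Bool)) :=
    (mapEdgeSet.injective f hinj).prodMap Function.injective_id
  rcases A with x | e <;> rcases B with y | e'
  · simp [subdivisionDist, hf]
  · simp [subdivisionDist, infDist_map hf]
  · simp [subdivisionDist, infDist_map hf]
  · have hee' : (f.mapEdgeSet e.1, e.2) = (f.mapEdgeSet e'.1, e'.2) ↔ e = e' := hmap.eq_iff
    simp only [mapSubdivideDiamond_inr, subdivisionDist, mapEdgeSet_coe, infDistSym2_map hf]
    classical exact if_congr hee' rfl rfl

end SimpleGraph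

namespace Diamond

open SimpleGraph Sum

theorem DG_connected : ∀ k, (DG k).Connected
  | 0 => connected_top (V := Bool)
  | k + 1 => subdivideDiamond_connected (DG_connected k)

theorem dist_zero (a b : Bool) : (DG 0).dist a b = if a = b then 0 else 1 :=
  dist_top (V := Bool)

/-- Matching on a vertex of `D_{n+1}` directly types its components by `(DSig n).1`, which
`rw` with lemmas stated for `DV n` does not see through; this eliminator keeps them typed by
`DV n`. -/
@[elab_as_elim]
theorem DV.casesSucc {n : ℕ} {P : DV (n + 1) → Prop} (inl : ∀ x : DV n, P (inl x))
    (inr : ∀ f : (DG n).edgeSet × Bool, P (inr f)) (w : DV (n + 1)) : P w :=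
  Sum.rec inl inr w

theorem dist_inl_inl (k : ℕ) (x y : DV k) :
    (DG (k + 1)).dist (inl x) (inl y) = 2 * (DG k).dist x y :=
  (DG_connected k).dist_subdivideDiamond (inl x) (inl y)

theorem dist_inl_inr (k : ℕ) (x : DV k) (f : (DG k).edgeSet × Bool) :
    (DG (k + 1)).dist (inl x) (inr f) = 2 * (DG k).infDist x f.1 + 1 :=
  (DG_connected k).dist_subdivideDiamond (inl x) (inr f)

theorem dist_inr_inl (k : ℕ) (f : (DG k).edgeSet × Bool) (y : DV k) :
    (DG (k + 1)).dist (inr f) (inl y) = 2 * (DG k).infDist y f.1 + 1 :=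
  (DG_connected k).dist_subdivideDiamond (inr f) (inl y)

def incl (k : ℕ) : (n : ℕ) → DV k → DV (k + n)
  | 0 => id
  | n + 1 => inl ∘ incl k n

theorem dist_incl (k n : ℕ) (x y : DV k) :
    (DG (k + n)).dist (incl k n x) (incl k n y) = 2 ^ n * (DG k).dist x y := by
  induction n with
  | zero => simp [incl]
  | succ n ih =>
    rw [pow_succ, mul_comm _ 2, mul_assoc, ← ih]
    exact dist_inl_inl _ _ _

def pole : (n : ℕ) → Bool → DV n
  | 0, b => b
  | n + 1, b => inl (pole n b)

theorem dist_pole_ne_of_adj : ∀ {n : ℕ} {p q : DV n}, (DG n).Adj p q →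
    (DG n).dist (pole n false) p ≠ (DG n).dist (pole n false) q
  | 0, (p : Bool), (q : Bool), h => by
    have hpq : p ≠ q := h.ne
    cases p <;> cases q <;> simp_all [pole, dist_zero]
  | n + 1, p, q, h => by
    cases p using DV.casesSucc <;> cases q using DV.casesSucc
    all_goals first
      | exact h.elim
      | rw [pole, dist_inl_inl, dist_inl_inr]; omega

theorem dist_pole_add_dist_pole : ∀ (n : ℕ) (w : DV n),
    (DG n).dist (pole n false) w + (DG n).dist w (pole n true) = 2 ^ n
  | 0, (w : Bool) => by cases w <;> simp [pole, dist_zero]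
  | n + 1, w => by
    cases w using DV.casesSucc with
    | inl x =>
      rw [pole, pole, dist_inl_inl, dist_inl_inl, pow_succ]
      have := dist_pole_add_dist_pole n x
      omega
    | inr f =>
      rw [pole, pole, dist_inl_inr, dist_inr_inl, pow_succ]
      have hf := f.1.2
      generalize (f.1 : Sym2 (DV n)) = e at hf ⊢
      induction e using Sym2.ind with
      | _ p q =>
        have hpq : (DG n).Adj p q := hf
        simp only [infDist_mk]
        have hp := dist_pole_add_dist_pole n p
        have hq := dist_pole_add_dist_pole n q
        have hne := dist_pole_ne_of_adj hpq
        have hq_le : (DG n).dist (pole n false) q ≤ (DG n).dist (pole n false) p + 1 :=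
          (DG_connected n).dist_triangle.trans_eq (by rw [dist_eq_one_iff_adj.mpr hpq])
        have hp_le : (DG n).dist (pole n false) p ≤ (DG n).dist (pole n false) q + 1 :=
          (DG_connected n).dist_triangle.trans_eq (by rw [dist_eq_one_iff_adj.mpr hpq.symm])
        rw [dist_comm (u := pole n true), dist_comm (u := pole n true)]
        omega

section Subdiamond

variable {m : ℕ} {s t : DV m}

/-- The subdiamond of `D_{m+n}` over the edge `s t` of `D_m`, as an image of `D_n`. -/
def subdiamond (h : (DG m).Adj s t) : (n : ℕ) → DG n →g DG (m + n)
  | 0 =>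
    ⟨fun b => cond b t s, by
      rintro (_ | _) (_ | _) hab <;> first | exact (hab.ne rfl).elim | exact h | exact h.symm⟩
  | n + 1 => (subdiamond h n).mapSubdivideDiamond

theorem subdiamond_pole (h : (DG m).Adj s t) (n : ℕ) (b : Bool) :
    subdiamond h n (pole n b) = incl m n (cond b t s) := by
  induction n with
  | zero => rfl
  | succ n ih => exact congrArg inl ih

theorem dist_subdiamond (h : (DG m).Adj s t) : ∀ (n : ℕ) (a b : DV n),
    (DG (m + n)).dist (subdiamond h n a) (subdiamond h n b) = (DG n).dist a b
  | 0, (a : Bool), (b : Bool) => by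
    cases a <;> cases b <;> simp [subdiamond, dist_zero, dist_eq_one_iff_adj, h, h.symm]
  | n + 1, a, b =>
    Hom.dist_mapSubdivideDiamond (DG_connected n) (DG_connected (m + n)) (dist_subdiamond h n) a b

end Subdiamond

theorem exists_adj_dist_add_two_pow_add_dist_eq {m : ℕ} (n : ℕ) (u v : DV (m + n))
    (huv : 3 * 2 ^ n - 2 ≤ (DG (m + n)).dist u v) :
    ∃ s t : DV m, (DG m).Adj s t ∧
      (DG (m + n)).dist u (incl m n s) + 2 ^ n + (DG (m + n)).dist (incl m n t) v =
        (DG (m + n)).dist u v := by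
  induction n with
  | zero =>
    have huv' : u ≠ v := by
      rintro rfl
      simp [SimpleGraph.dist_self] at huv
    obtain ⟨t, hut, ht⟩ := (DG_connected (m + 0)).exists_adj_one_add_dist_eq huv'
    refine ⟨u, t, hut, ?_⟩
    simp only [incl, id, SimpleGraph.dist_self, pow_zero]
    omega
  | succ n ih =>
    have hpos : 1 ≤ 2 ^ n := Nat.one_le_two_pow
    have huv' : 3 * 2 ^ (n + 1) - 2 ≤ (subdivideDiamond (DG (m + n))).dist u v := huv
    rw [pow_succ] at huv'
    obtain ⟨x, y, hux, hyv, hxy⟩ :=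
      (DG_connected (m + n)).exists_inl_inl_dist_add_dist_add_dist_eq
        (by omega : 2 ≤ (subdivideDiamond (DG (m + n))).dist u v)
    obtain ⟨s, t, hst, hx⟩ := ih x y (by omega)
    have hlift := (DG_connected (m + n)).subdivideDiamond_dist_add_dist_add_dist_eq hxy
      (by rw [dist_incl, dist_eq_one_iff_adj.mpr hst, mul_one]; omega)
    rw [dist_incl, dist_eq_one_iff_adj.mpr hst, mul_one, mul_comm, ← pow_succ] at hlift
    exact ⟨s, t, hst, hlift⟩

theorem exists_isometric_subdiamond_between {k n : ℕ} (hn : n ≤ k) (u v : DV k)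
    (huv : 3 * 2 ^ n - 2 ≤ (DG k).dist u v) :
    ∃ ι : DV n → DV k, (∀ a b, (DG k).dist (ι a) (ι b) = (DG n).dist a b) ∧
      ∀ w, (DG k).dist u (ι w) + (DG k).dist (ι w) v = (DG k).dist u v := by
  obtain ⟨m, rfl⟩ : ∃ m, k = m + n := ⟨k - n, by omega⟩
  obtain ⟨s, t, hst, hgeo⟩ := exists_adj_dist_add_two_pow_add_dist_eq n u v huv
  refine ⟨subdiamond hst n, dist_subdiamond hst n, fun w => ?_⟩
  have hw := dist_pole_add_dist_pole n w
  rw [← dist_subdiamond hst n, ← dist_subdiamond hst n, subdiamond_pole, subdiamond_pole] at hw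
  have hG := DG_connected (m + n)
  have h₁ := hG.dist_triangle (u := u) (v := incl m n s) (w := subdiamond hst n w)
  have h₂ := hG.dist_triangle (u := subdiamond hst n w) (v := incl m n t) (w := v)
  have h₃ := hG.dist_triangle (u := u) (v := subdiamond hst n w) (w := v)
  dsimp only [cond] at hw
  omega

end Diamond

theorem Nat.three_mul_two_pow_sub_three_sub_two_le (a : ℕ) : 3 * 2 ^ (a - 3) - 2 ≤ 2 ^ a := by
  rcases le_or_gt 3 a with h | h
  · obtain ⟨b, rfl⟩ := Nat.exists_eq_add_of_le' h
    rw [Nat.add_sub_cancel, pow_add]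
    omega
  · rw [Nat.sub_eq_zero_of_le h.le, pow_zero]
    have := Nat.one_le_two_pow (n := a)
    omega

theorem subdiamond_between_general (k j : ℕ) (u v : DV k)
    (huv : 2 ^ (k - j) ≤ (DG k).dist u v) :
    ∃ ι : DV (k - j - 3) → DV k,
      (∀ a b : DV (k - j - 3), (DG k).dist (ι a) (ι b) = (DG (k - j - 3)).dist a b) ∧
        ∀ w : DV (k - j - 3), (DG k).dist u (ι w) + (DG k).dist (ι w) v = (DG k).dist u v :=
  Diamond.exists_isometric_subdiamond_between (by omega) u v
    ((Nat.three_mul_two_pow_sub_three_sub_two_le (k - j)).trans huv)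

/-- if `k > j + 3` and `u, v` are vertices of the diamond `D_k` with
`d(u,v) ≥ 2^(k-j)`, then there is a subdiamond isometric to `D_{k-j-3}` lying between `u`
and `v`: an isometric embedding `ι : D_{k-j-3} → D_k` such that every point of its image is
metrically between `u` and `v`. -/
theorem subdiamond_between (k j : ℕ) (hkj : j + 3 < k) (u v : DV k)
    (huv : 2 ^ (k - j) ≤ (DG k).dist u v) :
    ∃ ι : DV (k - j - 3) → DV k,
      (∀ a b : DV (k - j - 3), (DG k).dist (ι a) (ι b) = (DG (k - j - 3)).dist a b) ∧
        ∀ w : DV (k - j - 3), (DG k).dist u (ι w) + (DG k).dist (ι w) v = (DG k).dist u v :=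
  subdiamond_between_general k j u v huv
end
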